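/- Let X be a finite-dimensional abstract simplicial complex. Suppose that for all vertices x, y of X, Σ_x ⊆ Σ_y implies x = y. Then the map x ↦ Σ_x is a simplicial isomorphism from X to N(N(X)), the nerve of the maximal simplices of the nerve of the maximal simplices of X. -/
import Mathlib


def IsComplex {V : Type*} (X : Set (Finset V)) : Prop :=
  (∀ s ∈ X, s.Nonempty) ∧ ∀ s ∈ X, ∀ t : Finset V, t ⊆ s → t.Nonempty → t ∈ X

def IsMaxSimplex {V : Type*} (X : Set (Finset V)) (K : Finset V) : Prop :=
  K ∈ X ∧ ∀ L ∈ X, K ⊆ L → K = L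

def FinDim {V : Type*} (X : Set (Finset V)) : Prop :=
  ∃ n : ℕ, ∀ s ∈ X, s.card ≤ n

def SigmaV {V : Type*} (X : Set (Finset V)) (x : V) : Set (Finset V) :=
  {K | IsMaxSimplex X K ∧ x ∈ K}

/-- A set of vertices of the nerve `N(X)` (i.e. of maximal simplices of `X`) all of whose
nonempty finite subsets are simplices of the nerve, i.e. have nonempty intersection. -/
def NerveClique {V : Type*} (X : Set (Finset V)) (S : Set (Finset V)) : Prop :=
  (∀ K ∈ S, IsMaxSimplex X K) ∧
    ∀ σ : Finset (Finset V), ↑σ ⊆ S → σ.Nonempty → ∃ x : V, ∀ K ∈ σ, x ∈ K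

/-- A maximal simplex of the nerve `N(X)` of the collection of maximal simplices of `X`:
a maximal collection of vertices of `N(X)` every finite subset of which is a simplex of `N(X)`. -/
def IsMaxNerveSimplex {V : Type*} (X : Set (Finset V)) (S : Set (Finset V)) : Prop :=
  NerveClique X S ∧ ∀ S' : Set (Finset V), NerveClique X S' → S ⊆ S' → S = S'

lemma exists_max' {V : Type*} {X : Set (Finset V)} (hfd : FinDim X) {s : Finset V}
    (hs : s ∈ X) : ∃ K, IsMaxSimplex X K ∧ s ⊆ K := by
  obtain ⟨n, hn⟩ := hfd
  set A := {m : ℕ | ∃ K ∈ X, s ⊆ K ∧ K.card = m} with hA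
  have hAne : A.Nonempty := ⟨s.card, s, hs, subset_rfl, rfl⟩
  have hbdd : BddAbove A := ⟨n, by rintro m ⟨K, hK, -, rfl⟩; exact hn K hK⟩
  obtain ⟨K, hKX, hsK, hKcard⟩ := Nat.sSup_mem hAne hbdd
  refine ⟨K, ⟨hKX, fun L hL hKL => ?_⟩, hsK⟩
  have : L.card ≤ K.card := hKcard ▸ le_csSup hbdd ⟨L, hL, hsK.trans hKL, rfl⟩
  exact Finset.eq_of_subset_of_card_le hKL this

lemma clique_inter {V : Type*} {X : Set (Finset V)} {S : Set (Finset V)}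
    (hS : NerveClique X S) (hne : S.Nonempty) : ∃ x, ∀ K ∈ S, x ∈ K := by
  classical
  obtain ⟨K₀, hK₀⟩ := hne
  set A := {m : ℕ | ∃ σ : Finset (Finset V), ↑σ ⊆ S ∧
    m = (K₀.filter (fun x => ∀ K ∈ σ, x ∈ K)).card} with hA
  have hAne : A.Nonempty :=
    ⟨_, (∅ : Finset (Finset V)), by simp, rfl⟩
  obtain ⟨σ, hσS, hσcard⟩ := Nat.sInf_mem hAne
  set t := K₀.filter (fun x => ∀ K ∈ σ, x ∈ K) with ht
  have htne : t.Nonempty := by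
    obtain ⟨x, hx⟩ := hS.2 (insert K₀ σ) (by
      intro K hK
      rcases Finset.mem_insert.mp (Finset.mem_coe.mp hK) with h | h
      · exact h ▸ hK₀
      · exact hσS h) ⟨K₀, Finset.mem_insert_self _ _⟩
    exact ⟨x, Finset.mem_filter.mpr ⟨hx K₀ (Finset.mem_insert_self _ _),
      fun K hK => hx K (Finset.mem_insert_of_mem hK)⟩⟩
  have hsub : ∀ K ∈ S, t ⊆ K := by
    intro K hKS
    by_contra h
    obtain ⟨y, hyt, hyK⟩ := Finset.not_subset.mp h
    have hmem : (K₀.filter (fun x => ∀ L ∈ insert K σ, x ∈ L)).card ∈ A :=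
      ⟨insert K σ, by
        intro L hL
        rcases Finset.mem_insert.mp (Finset.mem_coe.mp hL) with h' | h'
        · exact h' ▸ hKS
        · exact hσS h', rfl⟩
    have hss : K₀.filter (fun x => ∀ L ∈ insert K σ, x ∈ L) ⊂ t := by
      constructor
      · intro z hz
        rw [Finset.mem_filter] at hz
        rw [ht, Finset.mem_filter]
        exact ⟨hz.1, fun L hL => hz.2 L (Finset.mem_insert_of_mem hL)⟩
      · intro hcontra
        have h2 := hcontra hyt
        rw [Finset.mem_filter] at h2
        exact hyK (h2.2 K (Finset.mem_insert_self _ _))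
    have := Nat.sInf_le hmem
    rw [hσcard] at this
    exact absurd (Finset.card_lt_card hss) (not_lt.mpr this)
  obtain ⟨x, hx⟩ := htne
  exact ⟨x, fun K hK => hsub K hK hx⟩


/-- The map `x ↦ Σ_x` is a simplicial isomorphism from `X` onto `N(N(X))`:
it is a bijection from the vertices of `X` onto the vertices of `N(N(X))` (the maximal
simplices of `N(X)`), and a finite set of vertices is a simplex of `X` iff its image is a
simplex of `N(N(X))`, i.e. iff the sets `Σ_x` have nonempty common intersection. -/
theorem stmt3 {V : Type*} (X : Set (Finset V)) (hX : IsComplex X) (hfd : FinDim X)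
    (hne : X.Nonempty)
    (hsep : ∀ a b : V, ({a} : Finset V) ∈ X → ({b} : Finset V) ∈ X →
      SigmaV X a ⊆ SigmaV X b → a = b) :
    (∀ x : V, ({x} : Finset V) ∈ X → IsMaxNerveSimplex X (SigmaV X x)) ∧
    (∀ x y : V, ({x} : Finset V) ∈ X → ({y} : Finset V) ∈ X →
      SigmaV X x = SigmaV X y → x = y) ∧
    (∀ S : Set (Finset V), IsMaxNerveSimplex X S →
      ∃ x : V, ({x} : Finset V) ∈ X ∧ S = SigmaV X x) ∧
    (∀ s : Finset V, s.Nonempty → (∀ x ∈ s, ({x} : Finset V) ∈ X) →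
      (s ∈ X ↔ (⋂ x ∈ s, SigmaV X x).Nonempty)) := by

  -- singletons of vertices of simplices are in X
  have hsing : ∀ K ∈ X, ∀ x ∈ K, ({x} : Finset V) ∈ X := by
    intro K hK x hx
    exact hX.2 K hK {x} (Finset.singleton_subset_iff.mpr hx) ⟨x, Finset.mem_singleton_self x⟩
  -- SigmaV is a nerve clique
  have hclique : ∀ x : V, NerveClique X (SigmaV X x) := by
    intro x
    refine ⟨fun K hK => hK.1, fun σ hσ hσne => ⟨x, fun K hK => (hσ hK).2⟩⟩
  -- SigmaV is nonempty when {x} ∈ X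
  have hSne : ∀ x : V, ({x} : Finset V) ∈ X → (SigmaV X x).Nonempty := by
    intro x hx
    obtain ⟨K, hKmax, hKsub⟩ := exists_max' hfd hx
    exact ⟨K, hKmax, hKsub (Finset.mem_singleton_self x)⟩
  -- every nonempty nerve clique is contained in some SigmaV x with {x} ∈ X
  have hcont : ∀ S : Set (Finset V), NerveClique X S → S.Nonempty →
      ∃ x : V, ({x} : Finset V) ∈ X ∧ S ⊆ SigmaV X x := by
    intro S hS ⟨K₀, hK₀⟩
    obtain ⟨x, hx⟩ := clique_inter hS ⟨K₀, hK₀⟩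
    exact ⟨x, hsing K₀ (hS.1 K₀ hK₀).1 x (hx K₀ hK₀),
      fun K hK => ⟨hS.1 K hK, hx K hK⟩⟩
  -- part 1
  have part1 : ∀ x : V, ({x} : Finset V) ∈ X → IsMaxNerveSimplex X (SigmaV X x) := by
    intro x hx
    refine ⟨hclique x, fun S' hS' hsub => ?_⟩
    obtain ⟨y, hy, hS'y⟩ := hcont S' hS' ((hSne x hx).mono hsub)
    have hxy : x = y := hsep x y hx hy (hsub.trans hS'y)
    exact Set.Subset.antisymm hsub (hxy ▸ hS'y)
  refine ⟨part1, ?_, ?_, ?_⟩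
  · intro x y hx hy h
    exact hsep x y hx hy h.subset
  · intro S hS
    rcases Set.eq_empty_or_nonempty S with hSe | hSne'
    · obtain ⟨s, hsX⟩ := hne
      obtain ⟨x₀, hx₀⟩ := hX.1 s hsX
      have hx₀X := hsing s hsX x₀ hx₀
      exact ⟨x₀, hx₀X, hS.2 (SigmaV X x₀) (hclique x₀) (hSe ▸ Set.empty_subset _)⟩
    · obtain ⟨x, hxX, hsub⟩ := hcont S hS.1 hSne'
      exact ⟨x, hxX, hS.2 (SigmaV X x) (hclique x) hsub⟩
  · intro s hs_ne hsX
    constructor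
    · intro hs
      obtain ⟨K, hKmax, hKsub⟩ := exists_max' hfd hs
      exact ⟨K, Set.mem_iInter₂.mpr fun x hx => ⟨hKmax, hKsub hx⟩⟩

    · rintro ⟨K, hK⟩
      rw [Set.mem_iInter₂] at hK
      obtain ⟨x₀, hx₀⟩ := id hs_ne
      have hKX : K ∈ X := (hK x₀ hx₀).1.1
      exact hX.2 K hKX s (fun x hx => (hK x hx).2) hs_ne
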